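/- arXiv:2110.11890 — 3 statements merged into one kernel-verified Lean document; each statement's English description precedes it below -/
import Mathlib

section
/- (Lemma: formulas and valuations of the coefficients z_x, z_y.) With the setup below, one has z_x = (x² − νy² + z²)/(2xz) and z_y = (z² − x² + νy²)/(2yz); consequently z_x ± 1 = ((z ± x)² − νy²)/(2xz) = (z ± x + sy)(z ± x − sy)/(2xz) and z_y ± s = ((z ± sy)² − x²)/(2yz) = (z − x ± sy)(z + x ± sy)/(2yz). If moreover L carries an additive valuation v : L → ℚ ∪ {∞} with v(2) = 0 and v(z) = 0, then, writing λ₁ = x + sy, λ₂ = z, λ₃ = x − sy, M_ij = v(λ_i − λ_j), N_ij = v(λ_i + λ_j), and ν = s², one has v(z_x − 1) = M₁₂ + M₂₃ − N₁₃, v(z_y + s) = M₂₃ + N₁₂ − M₁₃ + (1/2)v(ν), and v(z_y − s) = M₁₂ + N₂₃ − M₁₃ + (1/2)v(ν). -/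
/-!
STATEMENT 11: formulas and valuations of the coefficients `z_x`, `z_y`.
`E/F` is a quadratic extension with `char F ≠ 2` and conjugation `conj`; `L/E` is a field
extension containing `s` with `s² = ν ∈ F^×`.  The elements `x, y, z ∈ E` are nonzero and
satisfy the unitary relations `(x+sy)(x̄+sȳ) = 1`, `(x−sy)(x̄−sȳ) = 1`, `z z̄ = 1`, and
`z = z_x x + z_y y` with `z_x, z_y ∈ F`.  The conclusion gives the closed formulas for
`z_x`, `z_y`, the factorizations of `z_x ± 1` and `z_y ± s`, and (for an additive valuation
`v` on `L` with `v(2) = 0` and `v(z) = 0`) the valuation identities, stated additively: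
`v(z_x−1) + N₁₃ = M₁₂ + M₂₃`, `v(z_y+s) + M₁₃ = M₂₃ + N₁₂ + v(s)`,
`v(z_y−s) + M₁₃ = M₁₂ + N₂₃ + v(s)` (note `v(s) = (1/2)·v(ν)`).
-/

theorem zx_zy_formulas_and_valuations (F E L : Type) [Field F] [Field E] [Field L]
    [Algebra F E] (hchar : (2 : F) ≠ 0)
    (conj : E ≃ₐ[F] E) (hconj_nontriv : ∃ a : E, conj a ≠ a)
    (hconj_invol : ∀ a : E, conj (conj a) = a)
    (ιL : E →+* L) (ν : F) (hν : ν ≠ 0) (s : L) (hs : s ^ 2 = ιL (algebraMap F E ν))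
    (x y z : E) (hx : x ≠ 0) (hy : y ≠ 0) (hz : z ≠ 0)
    (hu1 : (ιL x + s * ιL y) * (ιL (conj x) + s * ιL (conj y)) = 1)
    (hu3 : (ιL x - s * ιL y) * (ιL (conj x) - s * ιL (conj y)) = 1)
    (hu2 : z * conj z = 1)
    (zx zy : F) (hdec : z = algebraMap F E zx * x + algebraMap F E zy * y)
    (v : L → WithTop ℚ)
    (hv_mul : ∀ a b : L, v (a * b) = v a + v b)
    (hv_add : ∀ a b : L, min (v a) (v b) ≤ v (a + b))
    (hv_top : ∀ a : L, v a = ⊤ ↔ a = 0)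
    (hv_two : v 2 = 0) (hv_z : v (ιL z) = 0) :
    -- closed formulas for z_x and z_y
    (algebraMap F E zx = (x ^ 2 - algebraMap F E ν * y ^ 2 + z ^ 2) / (2 * x * z)) ∧
    (algebraMap F E zy = (z ^ 2 - x ^ 2 + algebraMap F E ν * y ^ 2) / (2 * y * z)) ∧
    -- factorizations of z_x ± 1 over E and over L
    (algebraMap F E zx + 1 = ((z + x) ^ 2 - algebraMap F E ν * y ^ 2) / (2 * x * z)) ∧
    (algebraMap F E zx - 1 = ((z - x) ^ 2 - algebraMap F E ν * y ^ 2) / (2 * x * z)) ∧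
    (ιL (algebraMap F E zx) + 1 =
      (ιL z + ιL x + s * ιL y) * (ιL z + ιL x - s * ιL y) / ιL (2 * x * z)) ∧
    (ιL (algebraMap F E zx) - 1 =
      (ιL z - ιL x + s * ιL y) * (ιL z - ιL x - s * ιL y) / ιL (2 * x * z)) ∧
    -- factorizations of z_y ± s over L
    (ιL (algebraMap F E zy) + s =
      (ιL z - ιL x + s * ιL y) * (ιL z + ιL x + s * ιL y) / ιL (2 * y * z)) ∧
    (ιL (algebraMap F E zy) - s =
      (ιL z - ιL x - s * ιL y) * (ιL z + ιL x - s * ιL y) / ιL (2 * y * z)) ∧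
    -- valuation identities (additive form), with λ₁ = x+sy, λ₂ = z, λ₃ = x−sy
    (v (ιL (algebraMap F E zx) - 1) + v ((ιL x + s * ιL y) + (ιL x - s * ιL y)) =
      v ((ιL x + s * ιL y) - ιL z) + v (ιL z - (ιL x - s * ιL y))) ∧
    (v (ιL (algebraMap F E zy) + s) + v ((ιL x + s * ιL y) - (ιL x - s * ιL y)) =
      v (ιL z - (ιL x - s * ιL y)) + v ((ιL x + s * ιL y) + ιL z) + v s) ∧
    (v (ιL (algebraMap F E zy) - s) + v ((ιL x + s * ιL y) - (ιL x - s * ιL y)) =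
      v ((ιL x + s * ιL y) - ιL z) + v (ιL z + (ιL x - s * ιL y)) + v s) := by
  -- basic nonvanishing facts
  have h2E : (2 : E) ≠ 0 := fun h => hchar ((algebraMap F E).injective (by rw [map_ofNat, map_zero]; exact h))
  have h2L : (2 : L) ≠ 0 := fun h => h2E (ιL.injective (by rw [map_ofNat, map_zero]; exact h))
  have hνE : algebraMap F E ν ≠ 0 := fun h => hν ((algebraMap F E).injective (by rw [map_zero]; exact h))
  have hνL : ιL (algebraMap F E ν) ≠ 0 := fun h => hνE (ιL.injective (by rw [map_zero]; exact h))
  have hsne : s ≠ 0 := by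
    intro h
    apply hνL
    rw [← hs, h]; ring
  have hcx : conj x ≠ 0 := fun h => hx (by rw [← hconj_invol x, h, map_zero])
  -- relations pulled back to E
  have hA2 : 2 * (ιL x * ιL (conj x) + ιL (algebraMap F E ν) * (ιL y * ιL (conj y))) = 2 := by
    linear_combination hu1 + hu3 - 2 * (ιL y * ιL (conj y)) * hs
  have hAL : ιL x * ιL (conj x) + ιL (algebraMap F E ν) * (ιL y * ιL (conj y)) = 1 :=
    mul_left_cancel₀ h2L (hA2.trans (mul_one 2).symm)
  have hAE : x * conj x + algebraMap F E ν * (y * conj y) = 1 := by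
    apply ιL.injective
    rw [map_add, map_mul, map_mul, map_mul, map_one]
    exact hAL
  have hB2 : (2 * s) * (ιL x * ιL (conj y) + ιL (conj x) * ιL y) = 0 := by
    linear_combination hu1 - hu3
  have hBL : ιL x * ιL (conj y) + ιL (conj x) * ιL y = 0 :=
    mul_left_cancel₀ (mul_ne_zero h2L hsne) (by rw [hB2, mul_zero])
  have hBE : x * conj y + conj x * y = 0 := by
    apply ιL.injective
    rw [map_add, map_mul, map_mul, map_zero]
    exact hBL
  have hdec' : conj z = algebraMap F E zx * conj x + algebraMap F E zy * conj y := by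
    rw [hdec, map_add, map_mul, map_mul, conj.commutes, conj.commutes]
  have hC : (algebraMap F E zx)^2 * (x * conj x) + (algebraMap F E zy)^2 * (y * conj y) = 1 := by
    linear_combination hu2 - conj z * hdec - (algebraMap F E zx * x + algebraMap F E zy * y) * hdec' - algebraMap F E zx * algebraMap F E zy * hBE
  have h1' : conj x * (x^2 - algebraMap F E ν * y^2) = x := by
    linear_combination x * hAE - algebraMap F E ν * y * hBE
  have h2' : conj x * ((algebraMap F E zx)^2 * x^2 - (algebraMap F E zy)^2 * y^2) = x := by
    linear_combination x * hC - (algebraMap F E zy)^2 * y * hBE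
  have hR : x^2 - algebraMap F E ν * y^2 = (algebraMap F E zx)^2 * x^2 - (algebraMap F E zy)^2 * y^2 :=
    mul_left_cancel₀ hcx (h1'.trans h2'.symm)
  -- the two key multiplicative identities in E
  have hzx : algebraMap F E zx * (2 * x * z) = x^2 - algebraMap F E ν * y^2 + z^2 := by
    rw [hdec]; linear_combination -hR
  have hzy : algebraMap F E zy * (2 * y * z) = z^2 - x^2 + algebraMap F E ν * y^2 := by
    rw [hdec]; linear_combination hR
  have h2xzE : (2 : E) * x * z ≠ 0 := mul_ne_zero (mul_ne_zero h2E hx) hz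
  have h2yzE : (2 : E) * y * z ≠ 0 := mul_ne_zero (mul_ne_zero h2E hy) hz
  have h2xzL : ιL (2 * x * z) ≠ 0 := fun h => h2xzE (ιL.injective (by rw [map_zero]; exact h))
  have h2yzL : ιL (2 * y * z) ≠ 0 := fun h => h2yzE (ιL.injective (by rw [map_zero]; exact h))
  -- images in L
  have hmx : ιL (2 * x * z) = 2 * ιL x * ιL z := by rw [map_mul, map_mul, map_ofNat]
  have hmy : ιL (2 * y * z) = 2 * ιL y * ιL z := by rw [map_mul, map_mul, map_ofNat]
  have hzxL : ιL (algebraMap F E zx) * (2 * ιL x * ιL z)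
      = (ιL x)^2 - ιL (algebraMap F E ν) * (ιL y)^2 + (ιL z)^2 := by
    have h := congrArg ιL hzx
    simp only [map_mul, map_add, map_sub, map_pow, map_ofNat] at h
    linear_combination h
  have hzyL : ιL (algebraMap F E zy) * (2 * ιL y * ιL z)
      = (ιL z)^2 - (ιL x)^2 + ιL (algebraMap F E ν) * (ιL y)^2 := by
    have h := congrArg ιL hzy
    simp only [map_mul, map_add, map_sub, map_pow, map_ofNat] at h
    linear_combination h
  -- product identities in L
  have P0 : (ιL (algebraMap F E zx) + 1) * ιL (2 * x * z)
      = (ιL z + ιL x + s * ιL y) * (ιL z + ιL x - s * ιL y) := by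
    rw [hmx]; linear_combination hzxL + (ιL y)^2 * hs
  have P1 : (ιL (algebraMap F E zx) - 1) * ιL (2 * x * z)
      = (ιL z - ιL x + s * ιL y) * (ιL z - ιL x - s * ιL y) := by
    rw [hmx]; linear_combination hzxL + (ιL y)^2 * hs
  have P2 : (ιL (algebraMap F E zy) + s) * ιL (2 * y * z)
      = (ιL z - ιL x + s * ιL y) * (ιL z + ιL x + s * ιL y) := by
    rw [hmy]; linear_combination hzyL - (ιL y)^2 * hs
  have P3 : (ιL (algebraMap F E zy) - s) * ιL (2 * y * z)
      = (ιL z - ιL x - s * ιL y) * (ιL z + ιL x - s * ιL y) := by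
    rw [hmy]; linear_combination hzyL - (ιL y)^2 * hs
  -- valuation facts
  have hv1 : v 1 = 0 := by
    have h := hv_mul 1 1
    rw [mul_one] at h
    rcases eq_or_ne (v 1) ⊤ with ht | ht
    · exact absurd ((hv_top 1).mp ht) one_ne_zero
    · lift v 1 to ℚ using ht with q
      have hq : q = q + q := by exact_mod_cast h
      have : q = 0 := by linarith
      exact_mod_cast this
  have hvm1 : v (-1) = 0 := by
    have h := hv_mul (-1) (-1)
    rw [neg_mul_neg, one_mul, hv1] at h
    rcases eq_or_ne (v (-1)) ⊤ with ht | ht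
    · rw [ht, top_add] at h; exact absurd h.symm (by simp)
    · lift v (-1) to ℚ using ht with q
      have hq : (0 : ℚ) = q + q := by exact_mod_cast h
      have : q = 0 := by linarith
      exact_mod_cast this
  have hvneg : ∀ a : L, v (-a) = v a := fun a => by
    rw [← neg_one_mul, hv_mul, hvm1, zero_add]
  have hv2xz : v (ιL (2 * x * z)) = v (ιL x) := by
    rw [hmx, hv_mul, hv_mul, hv_two, hv_z, zero_add, add_zero]
  have hv2yz : v (ιL (2 * y * z)) = v (ιL y) := by
    rw [hmy, hv_mul, hv_mul, hv_two, hv_z, zero_add, add_zero]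
  refine ⟨?_, ?_, ?_, ?_, ?_, ?_, ?_, ?_, ?_, ?_, ?_⟩
  · rw [eq_div_iff h2xzE]; exact hzx
  · rw [eq_div_iff h2yzE]; exact hzy
  · rw [eq_div_iff h2xzE]; linear_combination hzx
  · rw [eq_div_iff h2xzE]; linear_combination hzx
  · rw [eq_div_iff h2xzL]; exact P0
  · rw [eq_div_iff h2xzL]; exact P1
  · rw [eq_div_iff h2yzL]; exact P2
  · rw [eq_div_iff h2yzL]; exact P3
  · -- v(zx − 1)
    have key := congrArg v P1
    rw [hv_mul, hv_mul, hv2xz] at key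
    have e1 : (ιL x + s * ιL y) + (ιL x - s * ιL y) = 2 * ιL x := by ring
    have e2 : (ιL x + s * ιL y) - ιL z = -(ιL z - ιL x - s * ιL y) := by ring
    have e3 : ιL z - (ιL x - s * ιL y) = ιL z - ιL x + s * ιL y := by ring
    rw [e1, e2, e3, hvneg, hv_mul, hv_two, zero_add]
    exact key.trans (add_comm _ _)
  · -- v(zy + s)
    have key := congrArg v P2
    rw [hv_mul, hv_mul, hv2yz] at key
    have e1 : (ιL x + s * ιL y) - (ιL x - s * ιL y) = 2 * (s * ιL y) := by ring
    have e3 : ιL z - (ιL x - s * ιL y) = ιL z - ιL x + s * ιL y := by ring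
    have e4 : (ιL x + s * ιL y) + ιL z = ιL z + ιL x + s * ιL y := by ring
    rw [e1, e3, e4, hv_mul, hv_mul, hv_two, zero_add, ← key]
    abel
  · -- v(zy − s)
    have key := congrArg v P3
    rw [hv_mul, hv_mul, hv2yz] at key
    have e1 : (ιL x + s * ιL y) - (ιL x - s * ιL y) = 2 * (s * ιL y) := by ring
    have e2 : (ιL x + s * ιL y) - ιL z = -(ιL z - ιL x - s * ιL y) := by ring
    have e4 : ιL z + (ιL x - s * ιL y) = ιL z + ιL x - s * ιL y := by ring
    rw [e1, e2, e4, hvneg, hv_mul, hv_mul, hv_two, zero_add, ← key]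
    abel
end

section
/- (Lemma: ordering of eigenvalue valuations, type I.) Let λ₁, λ₂, λ₃ ∈ E^× satisfy λ₃ = θ(λ₁)⁻¹ and λ₂·θ(λ₂) = 1, and suppose v(λ_i − λ_j) ≥ 0 for all i < j. Then v(λ₁ − λ₂) = v(λ₂ − λ₃), and v(λ₁ − λ₃) ≥ v(λ₁ − λ₂) ≥ 0. -/
/-!
STATEMENT 12: ordering of eigenvalue valuations, type I.
`E` is a field with an additive valuation `v` and a field automorphism `θ` preserving `v`.
If `λ₃ = θ(λ₁)⁻¹`, `λ₂·θ(λ₂) = 1` and all `v(λ_i − λ_j) ≥ 0`, then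
`v(λ₁−λ₂) = v(λ₂−λ₃)` and `v(λ₁−λ₃) ≥ v(λ₁−λ₂) ≥ 0`.
-/

theorem eigenvalue_valuation_ordering_typeI (E : Type) [Field E] (v : E → WithTop ℚ)
    (hv_mul : ∀ a b : E, v (a * b) = v a + v b)
    (hv_add : ∀ a b : E, min (v a) (v b) ≤ v (a + b))
    (hv_top : ∀ a : E, v a = ⊤ ↔ a = 0)
    (θ : E ≃+* E) (hθ : ∀ a : E, v (θ a) = v a)
    (lam1 lam2 lam3 : E) (h1 : lam1 ≠ 0) (h2 : lam2 ≠ 0) (h3 : lam3 ≠ 0)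
    (hl3 : lam3 = (θ lam1)⁻¹) (hl2 : lam2 * θ lam2 = 1)
    (hnn12 : 0 ≤ v (lam1 - lam2)) (hnn13 : 0 ≤ v (lam1 - lam3))
    (hnn23 : 0 ≤ v (lam2 - lam3)) :
    v (lam1 - lam2) = v (lam2 - lam3) ∧
      v (lam1 - lam2) ≤ v (lam1 - lam3) ∧ 0 ≤ v (lam1 - lam2) := by
  have hθ1 : θ lam1 ≠ 0 := fun h => h1 (by simpa using θ.injective (by simpa using h))
  have hm : lam3 * θ lam1 = 1 := by rw [hl3]; field_simp
  -- v 1 = 0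
  have hv1 : v 1 = 0 := by
    have h := hv_mul 1 1
    rw [one_mul] at h
    obtain ⟨q, hq⟩ := WithTop.ne_top_iff_exists.1 ((hv_top 1).not.mpr one_ne_zero)
    rw [← hq] at h ⊢
    have : q + q = q := by exact_mod_cast h.symm
    have : q = 0 := by linarith
    simp [this]
  -- auxiliary: doubling to zero
  have half0 : ∀ a : E, a ≠ 0 → v a + v a = 0 → v a = 0 := by
    intro a ha hsum
    obtain ⟨q, hq⟩ := WithTop.ne_top_iff_exists.1 ((hv_top a).not.mpr ha)
    rw [← hq] at hsum ⊢
    have : q + q = 0 := by exact_mod_cast hsum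
    have : q = 0 := by linarith
    simp [this]
  -- v lam2 = 0
  have hv2 : v lam2 = 0 := by
    apply half0 lam2 h2
    have := hv_mul lam2 (θ lam2)
    rw [hl2, hv1, hθ] at this
    exact this.symm
  -- v(-1) = 0 so v(-x) = v x
  have hvneg1 : v (-1) = 0 := by
    apply half0 (-1) (by norm_num)
    have := hv_mul (-1) (-1)
    rw [show (-1 : E) * (-1) = 1 by ring, hv1] at this
    exact this.symm
  have hvneg : ∀ a : E, v (-a) = v a := by
    intro a
    have := hv_mul (-1) a
    rw [hvneg1, zero_add] at this
    simpa using this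
  -- v lam3 + v lam1 = 0
  have hv31 : v lam3 + v lam1 = 0 := by
    have := hv_mul lam3 (θ lam1)
    rw [hm, hv1, hθ] at this
    exact this.symm
  have hv1nn : 0 ≤ v lam1 := by
    have h := hv_add (lam1 - lam2) lam2
    rw [sub_add_cancel] at h
    exact le_trans (le_min hnn12 hv2.ge) h
  have hv3nn : 0 ≤ v lam3 := by
    have h := hv_add (-(lam2 - lam3)) lam2
    rw [show -(lam2 - lam3) + lam2 = lam3 by ring, hvneg] at h
    exact le_trans (le_min hnn23 hv2.ge) h
  have hv3 : v lam3 = 0 := by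
    obtain ⟨q, hq⟩ := WithTop.ne_top_iff_exists.1 ((hv_top lam3).not.mpr h3)
    obtain ⟨r, hr⟩ := WithTop.ne_top_iff_exists.1 ((hv_top lam1).not.mpr h1)
    rw [← hq, ← hr] at hv31
    rw [← hq] at hv3nn ⊢
    rw [← hr] at hv1nn
    have hs : q + r = 0 := by exact_mod_cast hv31
    have hq0 : 0 ≤ q := by exact_mod_cast hv3nn
    have hr0 : 0 ≤ r := by exact_mod_cast hv1nn
    have : q = 0 := by linarith
    simp [this]
  -- key identity
  have key : lam2 - lam3 = lam3 * lam2 * θ (lam1 - lam2) := by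
    rw [map_sub]
    linear_combination (-lam2) * hm + lam3 * hl2
  have hveq : v (lam2 - lam3) = v (lam1 - lam2) := by
    rw [key, hv_mul, hv_mul, hθ, hv3, hv2]
    simp
  refine ⟨hveq.symm, ?_, hnn12⟩
  have h := hv_add (lam1 - lam2) (lam2 - lam3)
  rw [show lam1 - lam2 + (lam2 - lam3) = lam1 - lam3 by ring, hveq, min_self] at h
  exact h
end

section
/- (Lemma: the stabilizer group in SO₃.) The set of matrices g ∈ GL₃(K) of the form with rows (x, 0, y), (0, z, 0), (νy, 0, x) for some x, y, z ∈ K, satisfying gᵗ·J₃·g = J₃ and det g = 1, consists of exactly four elements, namely those with (x, y, z) ∈ {(1, 0, 1), (−1, 0, 1), (0, r⁻¹, −1), (0, −r⁻¹, −1)}; this set is a subgroup of GL₃(K) isomorphic to (ℤ/2ℤ) × (ℤ/2ℤ), generated by the matrix diag(−1, 1, −1) and the matrix with rows (0, 0, r⁻¹), (0, −1, 0), (r, 0, 0). -/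
open Matrix

noncomputable section

/-- The 3×3 antidiagonal matrix `J₃` with antidiagonal entries 1. -/
def J3 (K : Type) [Field K] : Matrix (Fin 3) (Fin 3) K :=
  !![0, 0, 1; 0, 1, 0; 1, 0, 0]

/-- The set of matrices of the shape `(x,0,y; 0,z,0; νy,0,x)` lying in `SO₃`
(i.e. satisfying `gᵗ J₃ g = J₃` and `det g = 1`). -/
def stabSet (K : Type) [Field K] (ν : K) : Set (Matrix (Fin 3) (Fin 3) K) :=
  {g | (∃ x y z : K, g = !![x, 0, y; 0, z, 0; ν * y, 0, x]) ∧
    gᵀ * J3 K * g = J3 K ∧ g.det = 1}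

theorem tr3 (K : Type) [Field K] (a b c d e f g h i : K) :
    (!![a,b,c;d,e,f;g,h,i])ᵀ = !![a,d,g;b,e,h;c,f,i] := by
  ext i j; fin_cases i <;> fin_cases j <;> rfl

set_option maxHeartbeats 2000000 in
theorem stabilizer_in_SO3 (K : Type) [Field K] (hchar : (2 : K) ≠ 0)
    (ν r : K) (hν : ν ≠ 0) (hr : r ^ 2 = ν) :
    stabSet K ν =
      {!![1, 0, 0; 0, 1, 0; 0, 0, 1], !![-1, 0, 0; 0, 1, 0; 0, 0, -1],
        !![0, 0, r⁻¹; 0, -1, 0; r, 0, 0], !![0, 0, -r⁻¹; 0, -1, 0; -r, 0, 0]} ∧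
    Nat.card (stabSet K ν) = 4 ∧
    (1 : Matrix (Fin 3) (Fin 3) K) ∈ stabSet K ν ∧
    (∀ a ∈ stabSet K ν, ∀ b ∈ stabSet K ν, a * b ∈ stabSet K ν) ∧
    (∀ a ∈ stabSet K ν, a * a = 1) ∧
    (∃ φ : ZMod 2 × ZMod 2 → Matrix (Fin 3) (Fin 3) K,
      (∀ a b : ZMod 2 × ZMod 2, φ (a + b) = φ a * φ b) ∧
      Function.Injective φ ∧ Set.range φ = stabSet K ν ∧
      φ (1, 0) = !![-1, 0, 0; 0, 1, 0; 0, 0, -1] ∧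
      φ (0, 1) = !![0, 0, r⁻¹; 0, -1, 0; r, 0, 0]) := by
  have hr0 : r ≠ 0 := fun h => hν (by rw [← hr, h]; ring)
  have hνr : ν * r⁻¹ = r := by rw [← hr]; field_simp
  have hνr' : ν * -r⁻¹ = -r := by rw [mul_neg, hνr]
  -- the four matrices
  set A : Matrix (Fin 3) (Fin 3) K := !![1, 0, 0; 0, 1, 0; 0, 0, 1] with hA
  set B : Matrix (Fin 3) (Fin 3) K := !![-1, 0, 0; 0, 1, 0; 0, 0, -1] with hB
  set C : Matrix (Fin 3) (Fin 3) K := !![0, 0, r⁻¹; 0, -1, 0; r, 0, 0] with hC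
  set D : Matrix (Fin 3) (Fin 3) K := !![0, 0, -r⁻¹; 0, -1, 0; -r, 0, 0] with hD
  clear_value A B C D
  have hA1 : A = (1 : Matrix (Fin 3) (Fin 3) K) := by
    rw [hA]; ext i j; fin_cases i <;> fin_cases j <;> simp [Matrix.one_apply, Matrix.vecHead, Matrix.vecTail]
  -- key set equality
  have key : stabSet K ν = {A, B, C, D} := by
    ext g
    constructor
    · rintro ⟨⟨x, y, z, rfl⟩, hJ, hdet⟩
      have e02 := congrFun (congrFun hJ 0) 2
      have e00 := congrFun (congrFun hJ 0) 0
      have e11 := congrFun (congrFun hJ 1) 1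
      simp [Matrix.mul_apply, Fin.sum_univ_three, J3, Matrix.vecHead, Matrix.vecTail] at e02 e00 e11
      simp [Matrix.det_fin_three, Matrix.vecHead, Matrix.vecTail] at hdet
      have h2 : (2 * ν) * (x * y) = 0 := by linear_combination e00
      have hxy := (mul_eq_zero.mp h2).resolve_left (mul_ne_zero hchar hν)
      rcases mul_eq_zero.mp hxy with hx | hy
      · subst hx
        have hz : z = -1 := by linear_combination -hdet - z * e02
        subst hz
        have hy2 : (r * y - 1) * (r * y + 1) = 0 := by linear_combination e02 + y * y * hr
        rcases mul_eq_zero.mp hy2 with h1 | h1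
        · have hy : y = r⁻¹ := by field_simp; linear_combination h1
          subst hy
          rw [hνr]
          right; right; left; exact hC.symm
        · have hy : y = -r⁻¹ := by field_simp; linear_combination h1
          subst hy
          rw [hνr']
          right; right; right; exact hD.symm
      · subst hy
        have hz : z = 1 := by linear_combination hdet - z * e02
        subst hz
        have hx2 : (x - 1) * (x + 1) = 0 := by linear_combination e02
        rw [mul_zero]
        rcases mul_eq_zero.mp hx2 with h1 | h1
        · have hx : x = 1 := by linear_combination h1
          subst hx; left; exact hA.symm
        · have hx : x = -1 := by linear_combination h1
          subst hx; right; left; exact hB.symm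
    · intro hg
      simp only [Set.mem_insert_iff, Set.mem_singleton_iff] at hg
      rcases hg with rfl | rfl | rfl | rfl
      · exact ⟨⟨1, 0, 1, by rw [hA]; try norm_num⟩,
          by rw [hA, tr3]; ext i j; fin_cases i <;> fin_cases j <;>
            simp [Matrix.mul_apply, Fin.sum_univ_three, J3, Matrix.vecHead, Matrix.vecTail],
          by rw [hA]; simp [Matrix.det_fin_three, Matrix.vecHead, Matrix.vecTail]⟩
      · exact ⟨⟨-1, 0, 1, by rw [hB]; try norm_num⟩,
          by rw [hB, tr3]; ext i j; fin_cases i <;> fin_cases j <;>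
            simp [Matrix.mul_apply, Fin.sum_univ_three, J3, Matrix.vecHead, Matrix.vecTail],
          by rw [hB]; simp [Matrix.det_fin_three, Matrix.vecHead, Matrix.vecTail]⟩
      · exact ⟨⟨0, r⁻¹, -1, by rw [hC]; rw [hνr]; try norm_num⟩,
          by rw [hC, tr3]; ext i j; fin_cases i <;> fin_cases j <;>
            simp [Matrix.mul_apply, Fin.sum_univ_three, J3, Matrix.vecHead, Matrix.vecTail] <;>
            field_simp,
          by rw [hC]; simp [Matrix.det_fin_three, Matrix.vecHead, Matrix.vecTail]; field_simp⟩
      · exact ⟨⟨0, -r⁻¹, -1, by rw [hD]; rw [hνr']; try norm_num⟩,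
          by rw [hD, tr3]; ext i j; fin_cases i <;> fin_cases j <;>
            simp [Matrix.mul_apply, Fin.sum_univ_three, J3, Matrix.vecHead, Matrix.vecTail] <;>
            field_simp,
          by rw [hD]; simp [Matrix.det_fin_three, Matrix.vecHead, Matrix.vecTail]; field_simp⟩
  -- products
  have hBB : B * B = 1 := by
    rw [hB]; ext i j; fin_cases i <;> fin_cases j <;>
      simp [Matrix.mul_apply, Fin.sum_univ_three, Matrix.one_apply, Matrix.vecHead, Matrix.vecTail]
  have hCC : C * C = 1 := by
    rw [hC]; ext i j; fin_cases i <;> fin_cases j <;>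
      simp [Matrix.mul_apply, Fin.sum_univ_three, Matrix.one_apply, Matrix.vecHead, Matrix.vecTail] <;>
      field_simp
  have hBC : B * C = D := by
    rw [hB, hC, hD]; ext i j; fin_cases i <;> fin_cases j <;>
      simp [Matrix.mul_apply, Fin.sum_univ_three, Matrix.vecHead, Matrix.vecTail]
  have hCB : C * B = D := by
    rw [hB, hC, hD]; ext i j; fin_cases i <;> fin_cases j <;>
      simp [Matrix.mul_apply, Fin.sum_univ_three, Matrix.vecHead, Matrix.vecTail]
  have hBD : B * D = C := by
    rw [hB, hC, hD]; ext i j; fin_cases i <;> fin_cases j <;>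
      simp [Matrix.mul_apply, Fin.sum_univ_three, Matrix.vecHead, Matrix.vecTail] <;> field_simp
  have hDB : D * B = C := by
    rw [hB, hC, hD]; ext i j; fin_cases i <;> fin_cases j <;>
      simp [Matrix.mul_apply, Fin.sum_univ_three, Matrix.vecHead, Matrix.vecTail] <;> field_simp
  have hCD : C * D = B := by
    rw [hB, hC, hD]; ext i j; fin_cases i <;> fin_cases j <;>
      simp [Matrix.mul_apply, Fin.sum_univ_three, Matrix.vecHead, Matrix.vecTail] <;> field_simp
  have hDC : D * C = B := by
    rw [hB, hC, hD]; ext i j; fin_cases i <;> fin_cases j <;>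
      simp [Matrix.mul_apply, Fin.sum_univ_three, Matrix.vecHead, Matrix.vecTail] <;> field_simp
  have hDD : D * D = 1 := by
    rw [hD]; ext i j; fin_cases i <;> fin_cases j <;>
      simp [Matrix.mul_apply, Fin.sum_univ_three, Matrix.one_apply, Matrix.vecHead, Matrix.vecTail] <;>
      field_simp
  -- distinctness
  have hAB : A ≠ B := fun h => by
    have := congrFun (congrFun h 0) 0
    rw [hA, hB] at this; simp at this
    exact hchar (by linear_combination this)
  have hAC : A ≠ C := fun h => by
    have := congrFun (congrFun h 0) 0
    rw [hA, hC] at this; simp at this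
  have hAD : A ≠ D := fun h => by
    have := congrFun (congrFun h 0) 0
    rw [hA, hD] at this; simp at this
  have hBC' : B ≠ C := fun h => by
    have := congrFun (congrFun h 0) 0
    rw [hB, hC] at this; simp at this
  have hBD' : B ≠ D := fun h => by
    have := congrFun (congrFun h 0) 0
    rw [hB, hD] at this; simp at this
  have hCD' : C ≠ D := fun h => by
    have := congrFun (congrFun h 0) 2
    rw [hC, hD] at this; simp at this
    have h2 : (2 : K) * r⁻¹ = 0 := by linear_combination this
    rcases mul_eq_zero.mp h2 with h | h
    · exact hchar h
    · exact hr0 (by simpa using inv_eq_zero.mp h)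
  -- φ
  set φ : ZMod 2 × ZMod 2 → Matrix (Fin 3) (Fin 3) K :=
    fun p => if p.1 = 0 then (if p.2 = 0 then A else C) else (if p.2 = 0 then B else D) with hφ
  have hz2 : ∀ u : ZMod 2, u = 0 ∨ u = 1 := by decide
  have h11 : (1 + 1 : ZMod 2) = 0 := by decide
  have h10 : (1 : ZMod 2) ≠ 0 := by decide
  have hφhom : ∀ a b : ZMod 2 × ZMod 2, φ (a + b) = φ a * φ b := by
    rintro ⟨a1, a2⟩ ⟨b1, b2⟩
    rcases hz2 a1 with rfl | rfl <;> rcases hz2 a2 with rfl | rfl <;>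
      rcases hz2 b1 with rfl | rfl <;> rcases hz2 b2 with rfl | rfl <;>
      simp [hφ, Prod.mk_add_mk, h11, h10, hA1, hBB, hCC, hBC, hCB, hBD, hDB, hCD, hDC, hDD] <;>
      first
        | (rw [hA1]; simp)
        | exact hBB.symm
        | exact hCC.symm
        | exact hDD.symm
        | exact hBC.symm
        | exact hCB.symm
        | exact hBD.symm
        | exact hDB.symm
        | exact hCD.symm
        | exact hDC.symm
  have hφinj : Function.Injective φ := by
    rintro ⟨a1, a2⟩ ⟨b1, b2⟩ h
    rcases hz2 a1 with rfl | rfl <;> rcases hz2 a2 with rfl | rfl <;>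
      rcases hz2 b1 with rfl | rfl <;> rcases hz2 b2 with rfl | rfl <;>
      simp [hφ, h11, h10] at h ⊢ <;>
      first
        | rfl
        | exact absurd h hAB | exact absurd h.symm hAB
        | exact absurd h hAC | exact absurd h.symm hAC
        | exact absurd h hAD | exact absurd h.symm hAD
        | exact absurd h hBC' | exact absurd h.symm hBC'
        | exact absurd h hBD' | exact absurd h.symm hBD'
        | exact absurd h hCD' | exact absurd h.symm hCD'
  have hφrange : Set.range φ = stabSet K ν := by
    rw [key]
    ext m
    constructor
    · rintro ⟨⟨p1, p2⟩, rfl⟩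
      rcases hz2 p1 with rfl | rfl <;> rcases hz2 p2 with rfl | rfl <;> simp [hφ]
    · intro hm
      simp only [Set.mem_insert_iff, Set.mem_singleton_iff] at hm
      rcases hm with rfl | rfl | rfl | rfl
      · exact ⟨(0, 0), by simp [hφ]⟩
      · exact ⟨(1, 0), by simp [hφ]⟩
      · exact ⟨(0, 1), by simp [hφ]⟩
      · exact ⟨(1, 1), by simp [hφ]⟩
  refine ⟨key, ?_, ?_, ?_, ?_, φ, hφhom, hφinj, hφrange, by simp [hφ], by simp [hφ]⟩
  · rw [← hφrange, Nat.card_range_of_injective hφinj]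
    simp [Nat.card_eq_fintype_card]
  · rw [key, ← hA1]; left; rfl
  · intro a ha b hb
    rw [key] at ha hb ⊢
    simp only [Set.mem_insert_iff, Set.mem_singleton_iff] at ha hb ⊢
    rcases ha with rfl | rfl | rfl | rfl <;> rcases hb with rfl | rfl | rfl | rfl <;>
      simp only [hA1, one_mul, mul_one, hBB, hCC, hDD, hBC, hCB, hBD, hDB, hCD, hDC,
        Set.mem_insert_iff, Set.mem_singleton_iff] <;>
      tauto
  · intro a ha
    rw [key] at ha
    simp only [Set.mem_insert_iff, Set.mem_singleton_iff] at ha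
    rcases ha with rfl | rfl | rfl | rfl
    · rw [hA1, one_mul]
    · exact hBB
    · exact hCC
    · exact hDD
end
end
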